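/- arXiv:2012.08792 — 2 statements merged into one kernel-verified Lean document; each statement's English description precedes it below -/
import Mathlib

section
/- There is no pair of positive integers (k, l) with k ≥ l such that (2k + l)(2l + k)(k − l) = (k² + kl + l²)^{3/2}. -/
lemma descent : ∀ a m : ℕ, 0 < a → 0 < m → a ^ 3 ≠ 9 * m ^ 2 * (a + m) := by
  intro a
  induction a using Nat.strong_induction_on with
  | _ a ih =>
    intro m ha hm heq
    have h3a : 3 ∣ a := by
      have hp : Nat.Prime 3 := by norm_num
      have : (3 : ℕ) ∣ a ^ 3 := ⟨3 * m ^ 2 * (a + m), by linarith⟩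
      exact hp.dvd_of_dvd_pow this
    obtain ⟨b, rfl⟩ := h3a
    have h3m : 3 ∣ m := by
      have hp : Nat.Prime 3 := by norm_num
      have h : 27 * b ^ 3 = 27 * b * m ^ 2 + 9 * m ^ 3 := by nlinarith [heq]
      have hle : b * m ^ 2 ≤ b ^ 3 := by nlinarith
      have hc := Nat.sub_add_cancel hle
      have : (3 : ℕ) ∣ m ^ 3 := ⟨b ^ 3 - b * m ^ 2, by linarith⟩
      exact hp.dvd_of_dvd_pow this
    obtain ⟨n, rfl⟩ := h3m
    exact ih b (by omega) n (by omega) (by omega) (by nlinarith)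

theorem no_solution_cube_square :
    ¬ ∃ k l : ℕ, 1 ≤ l ∧ l ≤ k ∧
      ((2 * k + l) * (2 * l + k) * (k - l)) ^ 2 = (k ^ 2 + k * l + l ^ 2) ^ 3 := by
  rintro ⟨k, l, hl, hlk, heq⟩
  obtain ⟨d, rfl⟩ : ∃ d, k = l + d := ⟨k - l, by omega⟩
  have hd : (l + d) - l = d := by omega
  rw [hd] at heq
  set a := (l + d) ^ 2 + (l + d) * l + l ^ 2 with ha
  set m := (l + d) * l with hm
  have key : ((2 * (l + d) + l) * (2 * l + (l + d)) * d) ^ 2 + 27 * a * m ^ 2 + 27 * m ^ 3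
      = 4 * a ^ 3 := by rw [ha, hm]; ring
  have heq2 : a ^ 3 = 9 * m ^ 2 * (a + m) := by nlinarith
  exact descent a m (by positivity) (by positivity) heq2
end

section
/- Let (k₁,l₁) and (k₂,l₂) be pairs of positive integers with k₁ ≥ l₁, k₂ ≥ l₂, k₁² + k₁l₁ + l₁² = k₂² + k₂l₂ + l₂², and (k₁,l₁) ≠ (k₂,l₂). Then (2k₁+l₁)(k₁−l₁)(2l₁+k₁) ≠ (2k₂+l₂)(k₂−l₂)(2l₂+k₂). -/
lemma mono_aux (A x y : ℤ) (hx : 0 < x) (hxy : x < y) (hy : y ≤ A) :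
    (2*A+y)^2*(A-y) < (2*A+x)^2*(A-x) := by
  have key : (2*A+x)^2*(A-x) - (2*A+y)^2*(A-y)
      = (y-x)*(3*A*(y+x) + (y^2+x*y+x^2)) := by ring
  have h1 : 0 < y - x := by linarith
  have h2 : 0 < 3*A*(y+x) + (y^2+x*y+x^2) := by nlinarith
  nlinarith [mul_pos h1 h2]

lemma sq_cancel (a b : ℤ) (ha : 0 ≤ a) (hb : 0 ≤ b) (h : a^2 = b^2) : a = b := by
  have h0 : (a-b)*(a+b) = 0 := by linear_combination h
  rcases mul_eq_zero.mp h0 with h' | h' <;> linarith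

lemma int_version (K₁ L₁ K₂ L₂ : ℤ)
    (hL₁ : 1 ≤ L₁) (hL₂ : 1 ≤ L₂) (hK₁ : L₁ ≤ K₁) (hK₂ : L₂ ≤ K₂)
    (hA : K₁^2 + K₁*L₁ + L₁^2 = K₂^2 + K₂*L₂ + L₂^2)
    (hP : (2*K₁+L₁) * (K₁-L₁) * (2*L₁+K₁) = (2*K₂+L₂) * (K₂-L₂) * (2*L₂+K₂)) :
    K₁ = K₂ ∧ L₁ = L₂ := by
  obtain ⟨A, hA1, hA2⟩ : ∃ A : ℤ, K₁^2 + K₁*L₁ + L₁^2 = A ∧ K₂^2 + K₂*L₂ + L₂^2 = A :=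
    ⟨_, rfl, hA.symm⟩
  have hid₁ : ((2*K₁+L₁) * (K₁-L₁) * (2*L₁+K₁))^2
      = (2*A+3*(K₁*L₁))^2 * (A - 3*(K₁*L₁)) := by rw [← hA1]; ring
  have hid₂ : ((2*K₂+L₂) * (K₂-L₂) * (2*L₂+K₂))^2
      = (2*A+3*(K₂*L₂))^2 * (A - 3*(K₂*L₂)) := by rw [← hA2]; ring
  have hsq : (2*A+3*(K₁*L₁))^2 * (A - 3*(K₁*L₁))
      = (2*A+3*(K₂*L₂))^2 * (A - 3*(K₂*L₂)) := by rw [← hid₁, ← hid₂, hP]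
  have hp₁pos : 0 < 3*(K₁*L₁) := by nlinarith
  have hp₂pos : 0 < 3*(K₂*L₂) := by nlinarith
  have hb₁ : 3*(K₁*L₁) ≤ A := by rw [← hA1]; nlinarith [sq_nonneg (K₁ - L₁)]
  have hb₂ : 3*(K₂*L₂) ≤ A := by rw [← hA2]; nlinarith [sq_nonneg (K₂ - L₂)]
  have hp : K₁*L₁ = K₂*L₂ := by
    rcases lt_trichotomy (3*(K₁*L₁)) (3*(K₂*L₂)) with h | h | h
    · exact absurd hsq (ne_of_gt (mono_aux A _ _ hp₁pos h hb₂))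
    · linarith
    · exact absurd hsq (ne_of_lt (mono_aux A _ _ hp₂pos h hb₁))
  have hs : K₁ + L₁ = K₂ + L₂ := by
    have hsq' : (K₁ + L₁)^2 = (K₂ + L₂)^2 := by linear_combination hA1 - hA2 + hp
    exact sq_cancel _ _ (by linarith) (by linarith) hsq'
  have hd : K₁ - L₁ = K₂ - L₂ := by
    have hsq' : (K₁ - L₁)^2 = (K₂ - L₂)^2 := by linear_combination hA1 - hA2 - 3*hp
    exact sq_cancel _ _ (by linarith) (by linarith) hsq'
  constructor <;> linarith

theorem p_injective_on_level_set (k₁ l₁ k₂ l₂ : ℕ)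
    (hl₁ : 1 ≤ l₁) (hl₂ : 1 ≤ l₂) (h₁ : l₁ ≤ k₁) (h₂ : l₂ ≤ k₂)
    (hA : k₁ ^ 2 + k₁ * l₁ + l₁ ^ 2 = k₂ ^ 2 + k₂ * l₂ + l₂ ^ 2)
    (hne : (k₁, l₁) ≠ (k₂, l₂)) :
    (2 * k₁ + l₁) * (k₁ - l₁) * (2 * l₁ + k₁) ≠
      (2 * k₂ + l₂) * (k₂ - l₂) * (2 * l₂ + k₂) := by
  intro hP
  have hAZ : (k₁:ℤ)^2 + k₁*l₁ + l₁^2 = (k₂:ℤ)^2 + k₂*l₂ + l₂^2 := by exact_mod_cast hA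
  have hPZ : (2*(k₁:ℤ)+l₁) * ((k₁:ℤ)-l₁) * (2*(l₁:ℤ)+k₁)
      = (2*(k₂:ℤ)+l₂) * ((k₂:ℤ)-l₂) * (2*(l₂:ℤ)+k₂) := by
    have := congrArg (fun n : ℕ => (n : ℤ)) hP
    push_cast [Nat.cast_sub h₁, Nat.cast_sub h₂] at this
    linarith
  obtain ⟨hk, hl⟩ := int_version (k₁:ℤ) (l₁:ℤ) (k₂:ℤ) (l₂:ℤ)
    (by exact_mod_cast hl₁) (by exact_mod_cast hl₂)
    (by exact_mod_cast h₁) (by exact_mod_cast h₂) hAZ hPZ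
  exact hne (by simp [Prod.ext_iff]; exact ⟨by exact_mod_cast hk, by exact_mod_cast hl⟩)
end
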